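/- As E → −∞ one has J_E/E → max_{r∈[ρ₋,ρ₊]} χ(r) and A_E − log(−E) → A_a, where A_a := max_{r∈[ρ₋,ρ₊]} log χ(r). -/

import Mathlib

/-!
Let `M = max χ` on `[ρ₋, ρ₊]`, attained at the projection `r*` of `1/2` onto the interval, and
`δ_E = E M − J_E`. The normalisation `∫ (Eχ − J_E)⁻¹ = 2` forces `δ_E > 0`: otherwise the
denominator either vanishes somewhere (a non-integrable pole) or is negative throughout. Since the
integrand is then at most `δ_E⁻¹`, also `δ_E ≤ (ρ₊ − ρ₋)/2`, so `J_E/E = M − δ_E/E → M`.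

For the second limit, `A_E − log(−E) = log(J_E/E) + T_E`. Because `χ` falls off quadratically from
its peak, `1 − Eχ(r)/J_E ≥ (r − r*)²/(M + 1)` once `δ_E ≤ −E`, so the integrand of `T_E` is at most
`(log(M + 1) − log (r − r*)²) / (min χ · (−E))`, an integrable function divided by `−E`.
-/

open Real MeasureTheory Set Filter Topology Function

noncomputable section

/-- Mobility `χ(a) = a(1−a)`. -/
def chi (a : ℝ) : ℝ := a * (1 - a)

def chiPeak (ρm ρp : ℝ) : ℝ := max ρm (min (1/2) ρp)

theorem chi_sub_chi (a b : ℝ) : chi a - chi b = (a - b) * (1 - a - b) := by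
  unfold chi; ring

@[fun_prop]
theorem differentiable_chi : Differentiable ℝ chi := by
  unfold chi; fun_prop

@[fun_prop]
theorem continuous_chi : Continuous chi := differentiable_chi.continuous

theorem chi_pos {a : ℝ} (h0 : 0 < a) (h1 : a < 1) : 0 < chi a := by
  unfold chi; nlinarith

theorem chiPeak_mem {ρm ρp : ℝ} (h : ρm ≤ ρp) : chiPeak ρm ρp ∈ Icc ρm ρp :=
  ⟨le_max_left _ _, max_le h (min_le_right _ _)⟩

theorem chi_add_sq_le_chi_chiPeak {ρm ρp r : ℝ} (hr : r ∈ Icc ρm ρp) :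
    chi r + (r - chiPeak ρm ρp) ^ 2 ≤ chi (chiPeak ρm ρp) := by
  obtain ⟨hr1, hr2⟩ := hr
  unfold chiPeak
  rcases le_total ρp (1/2) with h | h
  · rw [min_eq_right h, max_eq_right (hr1.trans hr2)]
    nlinarith [chi_sub_chi ρp r]
  · rcases le_total ρm (1/2) with h' | h'
    · rw [min_eq_left h, max_eq_right h']
      nlinarith [chi_sub_chi (1/2) r]
    · rw [min_eq_left h, max_eq_left h']
      nlinarith [chi_sub_chi ρm r]

theorem chi_le_chi_chiPeak {ρm ρp r : ℝ} (hr : r ∈ Icc ρm ρp) :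
    chi r ≤ chi (chiPeak ρm ρp) := by
  nlinarith [chi_add_sq_le_chi_chiPeak hr]

theorem isGreatest_chi_image_Icc {ρm ρp : ℝ} (h : ρm ≤ ρp) :
    IsGreatest (chi '' Icc ρm ρp) (chi (chiPeak ρm ρp)) :=
  ⟨mem_image_of_mem _ (chiPeak_mem h), by rintro _ ⟨r, hr, rfl⟩; exact chi_le_chi_chiPeak hr⟩

theorem min_le_chi_of_mem_Icc {ρm ρp r : ℝ} (hr : r ∈ Icc ρm ρp) :
    min (chi ρm) (chi ρp) ≤ chi r := by
  obtain ⟨hr1, hr2⟩ := hr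
  rcases le_total (1 - r - ρm) 0 with h | h
  · exact (min_le_right _ _).trans (by nlinarith [chi_sub_chi r ρp])
  · exact (min_le_left _ _).trans (by nlinarith [chi_sub_chi r ρm])

theorem eventually_chi_ne (c : ℝ) : ∀ᶠ x in 𝓝[≠] c, chi x ≠ chi c := by
  have hne : ∀ᶠ x in 𝓝[≠] c, x ≠ 1 - c := by
    by_cases hc : c = 1 - c
    · exact hc ▸ self_mem_nhdsWithin
    · exact eventually_ne_nhdsWithin hc
  filter_upwards [self_mem_nhdsWithin, hne] with x hxc hx
  rw [ne_eq, ← sub_eq_zero, chi_sub_chi]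
  exact mul_ne_zero (sub_ne_zero.mpr hxc) (by contrapose! hx; linarith)

theorem not_intervalIntegrable_inv_of_differentiableAt {f : ℝ → ℝ} {a b c : ℝ}
    (hf : DifferentiableAt ℝ f c) (hc : f c = 0) (hne : ∀ᶠ x in 𝓝[≠] c, f x ≠ 0)
    (hab : a ≠ b) (hcab : c ∈ uIcc a b) :
    ¬ IntervalIntegrable (fun x => (f x)⁻¹) volume a b := by
  refine not_intervalIntegrable_of_sub_inv_isBigO_punctured ?_ hab hcab
  have hO : f =O[𝓝[≠] c] fun x => x - c := by
    simpa [hc] using hf.hasDerivAt.isBigO_sub.mono nhdsWithin_le_nhds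
  exact hO.inv_rev (hne.mono fun x hx h => absurd h hx)

theorem lt_mul_chi_chiPeak_of_integral_inv_pos {ρm ρp E J : ℝ} (h : ρm < ρp) (hE : E ≠ 0)
    (hI : 0 < ∫ r in ρm..ρp, (E * chi r - J)⁻¹) : J < E * chi (chiPeak ρm ρp) := by
  by_contra! hJ
  set F : ℝ → ℝ := fun r => E * chi r - J with hF
  have hFc : Continuous F := by fun_prop
  have hpeak := chiPeak_mem h.le
  -- at a zero of the denominator the integrand has a non-integrable pole, so the integral is `0`
  by_cases hzero : ∃ r₀ ∈ Icc ρm ρp, F r₀ = 0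
  · obtain ⟨r₀, hr₀, hFr₀⟩ := hzero
    have hne : ∀ᶠ x in 𝓝[≠] r₀, F x ≠ 0 := by
      filter_upwards [eventually_chi_ne r₀] with x hx
      have hJr₀ : J = E * chi r₀ := by linarith [show F r₀ = E * chi r₀ - J from rfl]
      simpa [hF, hJr₀, sub_eq_zero, hE] using hx
    have := not_intervalIntegrable_inv_of_differentiableAt (by fun_prop) hFr₀ hne h.ne
      (by rwa [uIcc_of_le h.le])
    rw [intervalIntegral.integral_undef this] at hI
    exact lt_irrefl _ hI
  · push Not at hzero
    have hneg : ∀ r ∈ Icc ρm ρp, F r < 0 := by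
      intro r hr
      refine lt_of_le_of_ne ?_ (hzero r hr)
      by_contra! hpos
      obtain ⟨c, hc, hFc0⟩ := intermediate_value_uIcc (a := chiPeak ρm ρp) (b := r)
        hFc.continuousOn (show (0 : ℝ) ∈ uIcc (F (chiPeak ρm ρp)) (F r) from
          mem_uIcc_of_le (by simp only [hF]; linarith) hpos.le)
      exact hzero c (uIcc_subset_Icc hpeak hr hc) hFc0
    have hnonpos : ∫ r in ρm..ρp, (F r)⁻¹ ≤ 0 := by
      rw [intervalIntegral.integral_of_le h.le]
      exact setIntegral_nonpos measurableSet_Ioc fun r hr =>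
        (inv_neg''.mpr (hneg r (Ioc_subset_Icc_self hr))).le
    exact absurd hI (not_lt.mpr hnonpos)

theorem integral_inv_le_of_lt_mul_chi_chiPeak {ρm ρp E J : ℝ} (h : ρm ≤ ρp) (hE : E ≤ 0)
    (hδ : 0 < E * chi (chiPeak ρm ρp) - J) :
    ∫ r in ρm..ρp, (E * chi r - J)⁻¹ ≤ (ρp - ρm) / (E * chi (chiPeak ρm ρp) - J) := by
  set δ := E * chi (chiPeak ρm ρp) - J
  have hle : ∀ r ∈ Icc ρm ρp, δ ≤ E * chi r - J := fun r hr => by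
    linarith [mul_le_mul_of_nonpos_left (chi_le_chi_chiPeak hr) hE]
  have hint : IntervalIntegrable (fun r => (E * chi r - J)⁻¹) volume ρm ρp := by
    refine ContinuousOn.intervalIntegrable ?_
    rw [uIcc_of_le h]
    exact ContinuousOn.inv₀ (by fun_prop) fun r hr => (hδ.trans_le (hle r hr)).ne'
  calc ∫ r in ρm..ρp, (E * chi r - J)⁻¹ ≤ ∫ _ in ρm..ρp, δ⁻¹ :=
        intervalIntegral.integral_mono_on h hint intervalIntegrable_const
          fun r hr => inv_anti₀ hδ (hle r hr)
    _ = (ρp - ρm) / δ := by simp [div_eq_mul_inv]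

theorem inv_mul_log_one_sub_div_bounds {E J x m M s : ℝ} (hE : E < 0) (hm : 0 < m) (hmx : m ≤ x)
    (hs : 0 < s) (hxs : x + s ≤ M) (hδ : 0 < E * M - J) (hδE : E * M - J ≤ -E) :
    0 ≤ (E * x)⁻¹ * log (1 - E * x / J) ∧
      (E * x)⁻¹ * log (1 - E * x / J) ≤ (log (M + 1) - log s) / m / -E := by
  have hx : 0 < x := hm.trans_le hmx
  have hJ : J < 0 := by nlinarith
  have hnum : 0 < -J := neg_pos.mpr hJ
  have hden : -E * s ≤ E * x - J := by nlinarith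
  have hden_pos : 0 < E * x - J := (mul_pos (neg_pos.mpr hE) hs).trans_le hden
  have hy : 1 - E * x / J = (E * x - J) / -J := by
    have := hJ.ne
    field_simp
    ring
  have hlog : -log (1 - E * x / J) = log (-J) - log (E * x - J) := by
    rw [hy, log_div hden_pos.ne' hnum.ne']; ring
  have hlog_nonneg : 0 ≤ log (-J) - log (E * x - J) :=
    sub_nonneg.mpr (log_le_log hden_pos (by nlinarith))
  have hlog_le : log (-J) - log (E * x - J) ≤ log (M + 1) - log s := by
    have h1 : log (-J) ≤ log (-E) + log (M + 1) := by
      rw [← log_mul (by linarith) (by nlinarith)]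
      exact log_le_log hnum (by nlinarith)
    have h2 : log (-E) + log s ≤ log (E * x - J) := by
      rw [← log_mul (by linarith) hs.ne']
      exact log_le_log (by nlinarith) hden
    linarith
  have hrepr : (E * x)⁻¹ * log (1 - E * x / J) = (log (-J) - log (E * x - J)) / x / -E := by
    rw [← hlog]; field_simp
  rw [hrepr]
  have hE' : 0 < -E := neg_pos.mpr hE
  refine ⟨by positivity, ?_⟩
  gcongr ?_ / ?_ / _
  · exact hlog_nonneg.trans hlog_le

theorem exists_integral_inv_mul_log_le {ρm ρp : ℝ} (h0 : 0 < ρm) (h1 : ρm < ρp) (h2 : ρp < 1) :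
    ∃ K, ∀ E J : ℝ, E < 0 → 0 < E * chi (chiPeak ρm ρp) - J → E * chi (chiPeak ρm ρp) - J ≤ -E →
      0 ≤ ∫ r in ρm..ρp, (E * chi r)⁻¹ * log (1 - E * chi r / J) ∧
      ∫ r in ρm..ρp, (E * chi r)⁻¹ * log (1 - E * chi r / J) ≤ K / -E := by
  set p := chiPeak ρm ρp
  set M := chi p
  set m := min (chi ρm) (chi ρp)
  have hm : 0 < m := lt_min (chi_pos h0 (h1.trans h2)) (chi_pos (h0.trans h1) h2)
  set g : ℝ → ℝ := fun r => (log (M + 1) - log ((r - p) ^ 2)) / m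
  refine ⟨∫ r in ρm..ρp, g r, fun E J hE hδ hδE => ?_⟩
  set f : ℝ → ℝ := fun r => (E * chi r)⁻¹ * log (1 - E * chi r / J)
  have hbound : ∀ᵐ r ∂(volume.restrict (Icc ρm ρp)), 0 ≤ f r ∧ f r ≤ g r / -E := by
    filter_upwards [ae_restrict_mem measurableSet_Icc,
      (countable_singleton p).ae_notMem (volume.restrict (Icc ρm ρp))] with r hr hrp
    have hrp' : r - p ≠ 0 := sub_ne_zero.mpr hrp
    exact inv_mul_log_one_sub_div_bounds hE hm (min_le_chi_of_mem_Icc hr) (by positivity)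
      (chi_add_sq_le_chi_chiPeak hr) hδ hδE
  have hf : IntervalIntegrable f volume ρm ρp := by
    refine ContinuousOn.intervalIntegrable ?_
    rw [uIcc_of_le h1.le]
    have hchi : ∀ r ∈ Icc ρm ρp, 0 < chi r := fun r hr =>
      chi_pos (h0.trans_le hr.1) (hr.2.trans_lt h2)
    have harg : ∀ r ∈ Icc ρm ρp, 1 - E * chi r / J ≠ 0 := fun r hr => by
      have hEJ : E * chi (chiPeak ρm ρp) ≤ E * chi r :=
        mul_le_mul_of_nonpos_left (chi_le_chi_chiPeak hr) hE.le
      have hJ0 : J ≠ 0 := by nlinarith [hchi _ (chiPeak_mem h1.le)]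
      rw [sub_ne_zero, ne_comm, Ne, div_eq_one_iff_eq hJ0]
      exact fun h => by linarith
    exact ContinuousOn.mul (ContinuousOn.inv₀ (by fun_prop)
      fun r hr => mul_ne_zero hE.ne (hchi r hr).ne') (ContinuousOn.log (by fun_prop) harg)
  have hlog : IntervalIntegrable (fun r => log (r - p)) volume ρm ρp := by
    simpa using
      (intervalIntegral.intervalIntegrable_log' (a := ρm - p) (b := ρp - p)).comp_sub_right p
  have hg : IntervalIntegrable g volume ρm ρp := by
    simp only [g, log_pow]
    exact ((intervalIntegrable_const.sub (hlog.const_mul _)).div_const _)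
  refine ⟨intervalIntegral.integral_nonneg_of_ae_restrict h1.le (hbound.mono fun r hr => hr.1), ?_⟩
  calc ∫ r in ρm..ρp, f r ≤ ∫ r in ρm..ρp, g r / -E :=
        intervalIntegral.integral_mono_ae_restrict h1.le hf (hg.div_const _)
          (hbound.mono fun r hr => hr.2)
    _ = (∫ r in ρm..ρp, g r) / -E := intervalIntegral.integral_div _ _

theorem isGreatest_log_chi_image_Icc {ρm ρp : ℝ} (h0 : 0 < ρm) (h1 : ρm ≤ ρp) (h2 : ρp < 1) :
    IsGreatest ((fun r => log (chi r)) '' Icc ρm ρp) (log (chi (chiPeak ρm ρp))) :=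
  ⟨mem_image_of_mem _ (chiPeak_mem h1), by
    rintro _ ⟨r, hr, rfl⟩
    exact log_le_log (chi_pos (h0.trans_le hr.1) (hr.2.trans_lt h2)) (chi_le_chi_chiPeak hr)⟩

theorem tendsto_div_atBot_of_sub_bounded {f : ℝ → ℝ} {M c : ℝ}
    (h : ∀ᶠ E in atBot, 0 ≤ E * M - f E ∧ E * M - f E ≤ c) :
    Tendsto (fun E => f E / E) atBot (𝓝 M) := by
  have hbdd : IsBoundedUnder (· ≤ ·) atBot ((fun x => ‖x‖) ∘ fun E => E * M - f E) :=
    isBoundedUnder_of_eventually_le (a := c) <| h.mono fun E hE => by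
      simpa [abs_of_nonneg hE.1] using hE.2
  have hlim := (tendsto_const_nhds (x := M)).sub
    (tendsto_inv_atBot_zero.zero_mul_isBoundedUnder_le hbdd)
  rw [sub_zero] at hlim
  refine hlim.congr' ?_
  filter_upwards [eventually_lt_atBot 0] with E hE
  field_simp [hE.ne]
  ring

theorem stmt17_general (ρm ρp E0 : ℝ)
    (h0 : 0 < ρm) (h1 : ρm < ρp) (h2 : ρp < 1) (J : ℝ → ℝ)
    (hJ : ∀ E : ℝ, E ≤ E0 → J E ≤ 0 ∧ (1/2) * (∫ r in ρm..ρp, (E * chi r - J E)⁻¹) = 1) :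
    Filter.Tendsto (fun E => J E / E) Filter.atBot
      (nhds (sSup (chi '' Set.Icc ρm ρp))) ∧
    Filter.Tendsto
      (fun E => (Real.log (-(J E))
        + (1/2) * ∫ r in ρm..ρp, (E * chi r)⁻¹ * Real.log (1 - E * chi r / J E))
        - Real.log (-E))
      Filter.atBot
      (nhds (sSup ((fun r => Real.log (chi r)) '' Set.Icc ρm ρp))) := by
  set M := chi (chiPeak ρm ρp)
  have hM : 0 < M :=
    chi_pos (h0.trans_le (chiPeak_mem h1.le).1) ((chiPeak_mem h1.le).2.trans_lt h2)
  have hδ : ∀ᶠ E in atBot, E ≤ -1 ∧ 0 < E * M - J E ∧ E * M - J E ≤ 1 / 2 := by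
    filter_upwards [eventually_le_atBot (min E0 (-1))] with E hE
    have hE1 : E ≤ -1 := hE.trans (min_le_right _ _)
    have hI := (hJ E (hE.trans (min_le_left _ _))).2
    have hpos := sub_pos.mpr <|
      lt_mul_chi_chiPeak_of_integral_inv_pos (E := E) (J := J E) h1 (by linarith) (by linarith)
    have hle := integral_inv_le_of_lt_mul_chi_chiPeak h1.le (by linarith) hpos
    rw [show (∫ r in ρm..ρp, (E * chi r - J E)⁻¹) = 2 by linarith, le_div_iff₀ hpos] at hle
    exact ⟨hE1, hpos, by linarith⟩
  have hJE : Tendsto (fun E => J E / E) atBot (𝓝 M) :=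
    tendsto_div_atBot_of_sub_bounded (hδ.mono fun E hE => ⟨hE.2.1.le, hE.2.2⟩)
  obtain ⟨K, hK⟩ := exists_integral_inv_mul_log_le h0 h1 h2
  have hT : Tendsto (fun E => (1/2) * ∫ r in ρm..ρp, (E * chi r)⁻¹ * log (1 - E * chi r / J E))
      atBot (𝓝 0) := by
    have hlim : Tendsto (fun E : ℝ => 1/2 * (K / -E)) atBot (𝓝 0) := by
      simpa only [mul_zero] using
        ((tendsto_const_nhds (x := K)).div_atTop
          (tendsto_neg_atBot_atTop (G := ℝ))).const_mul (1/2)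
    refine squeeze_zero' (hδ.mono fun E hE => ?_) (hδ.mono fun E hE => ?_) hlim
    · linarith [(hK E (J E) (by linarith) hE.2.1 (by linarith)).1]
    · linarith [(hK E (J E) (by linarith) hE.2.1 (by linarith)).2]
  refine ⟨(isGreatest_chi_image_Icc h1.le).csSup_eq ▸ hJE,
    (isGreatest_log_chi_image_Icc h0 h1.le h2).csSup_eq ▸ ?_⟩
  refine (add_zero (log M) ▸ ((continuousAt_log hM.ne').tendsto.comp hJE).add hT).congr' ?_
  filter_upwards [hδ] with E hE
  have hJneg : J E < 0 := by nlinarith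
  rw [comp_apply, ← neg_div_neg_eq, log_div (by linarith) (by linarith)]
  ring

/-- As `E → −∞`, `J_E/E → max_{[ρ₋,ρ₊]} χ` and `A_E − log(−E) → A_a = max_{[ρ₋,ρ₊]} log χ`. -/
theorem stmt17 (ρm ρp φm φp E0 : ℝ)
    (h0 : 0 < ρm) (h1 : ρm < ρp) (h2 : ρp < 1)
    (hφm : φm = Real.log (ρm / (1 - ρm))) (hφp : φp = Real.log (ρp / (1 - ρp)))
    (hE0 : E0 = (φp - φm) / 2) (J : ℝ → ℝ)
    (hJ : ∀ E : ℝ, E ≤ E0 → J E ≤ 0 ∧ (1/2) * (∫ r in ρm..ρp, (E * chi r - J E)⁻¹) = 1) :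
    Filter.Tendsto (fun E => J E / E) Filter.atBot
      (nhds (sSup (chi '' Set.Icc ρm ρp))) ∧
    Filter.Tendsto
      (fun E => (Real.log (-(J E))
        + (1/2) * ∫ r in ρm..ρp, (E * chi r)⁻¹ * Real.log (1 - E * chi r / J E))
        - Real.log (-E))
      Filter.atBot
      (nhds (sSup ((fun r => Real.log (chi r)) '' Set.Icc ρm ρp))) :=
  stmt17_general ρm ρp E0 h0 h1 h2 J hJ
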